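/- arXiv:2210.01102 — 7 statements merged into one kernel-verified Lean document; each statement's English description precedes it below -/
import Mathlib

section
/- Let (f_{-1}, f_0, ..., f_{d-1}) be a sequence of characters of a finite group G. Suppose there exists an integer 0 ≤ r ≤ d such that for all i, (d-i)·f_{i-1} ≤_G (i-r)·f_i (i.e., (i-r)·f_i − (d-i)·f_{i-1} is an effective character). Then the sequence (f_{r-1}, ..., f_{d-1}) is effectively flawless: writing g_j = f_{r-1+j} and D = d - r, we have g_{j-1} ≤_G g_j for 0 ≤ j ≤ (D-1)/2, and g_{j-1} ≤_G g_{D-j-1} for 0 ≤ j ≤ D/2. -/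
/-- Characters of a finite group are modeled by their integer coefficient
vectors in the basis of irreducible characters (`ι → ℤ`).  `0 ≤ χ` (pointwise) means
`χ` is an effective character, and `χ ≤ ψ` means `ψ - χ` is effective.
If `(f₋₁, …, f_{d-1})` (encoded as `F : ℕ → ι → ℤ` with `F k = f_{k-1}`) is a sequence of
characters with `(d-i)·f_{i-1} ≤ (i-r)·f_i` for all `i`, then `(f_{r-1}, …, f_{d-1})` is
effectively flawless. -/
theorem stmt0 {ι : Type*} (d r : ℕ) (hr : r ≤ d) (F : ℕ → ι → ℤ)
    (hchar : ∀ k, k ≤ d → 0 ≤ F k)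
    (hineq : ∀ i : ℕ, i < d → ((d : ℤ) - i) • F i ≤ ((i : ℤ) - r) • F (i + 1)) :
    (∀ j : ℕ, 2 * (j : ℤ) ≤ (d : ℤ) - r - 1 → F (r + j) ≤ F (r + j + 1)) ∧
    (∀ j : ℕ, 2 * (j : ℤ) ≤ (d : ℤ) - r → F (r + j) ≤ F (d - j)) := by
  have hineq' : ∀ i : ℕ, i < d → ∀ x, ((d : ℤ) - i) * F i x ≤ ((i : ℤ) - r) * F (i + 1) x := by
    intro i hi x
    have h := Pi.le_def.mp (hineq i hi) x
    simpa [smul_eq_mul] using h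
  have hchar' : ∀ k, k ≤ d → ∀ x, 0 ≤ F k x := by
    intro k hk x
    exact Pi.le_def.mp (hchar k hk) x
  -- monotone step
  have step : ∀ i : ℕ, i < d → r + 1 ≤ i → 2 * i ≤ d + r → F i ≤ F (i + 1) := by
    intro i hi hri h2i
    rw [Pi.le_def]; intro x
    have h1 := hineq' i hi x
    have h0 := hchar' i hi.le x
    have hc : (0:ℤ) < (i:ℤ) - r := by
      have : (r:ℤ) + 1 ≤ i := by exact_mod_cast hri
      linarith
    have hcd : (i:ℤ) - r ≤ (d:ℤ) - i := by
      have : (2*i : ℤ) ≤ (d:ℤ) + r := by exact_mod_cast h2i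
      linarith
    nlinarith
  -- F r vanishes when r < d
  have hFr0 : r < d → ∀ x, F r x ≤ 0 := by
    intro hrd x
    have h1 := hineq' r hrd x
    have h0 := hchar' r hrd.le x
    have hdr : (0:ℤ) < (d:ℤ) - r := by
      have : (r:ℤ) + 1 ≤ d := by exact_mod_cast hrd
      linarith
    nlinarith
  have main : ∀ g j : ℕ, 1 ≤ j → r + 2*j + g = d → F (r+j) ≤ F (r+j+g) := by
    intro g
    induction g using Nat.strong_induction_on with
    | _ g ih =>
      match g, ih with
      | 0, _ => intro j hj hd; exact le_refl _
      | 1, _ =>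
        intro j hj hd
        exact step (r+j) (by omega) (by omega) (by omega)
      | (g+2), ih =>
        intro j hj hd
        have hmid : F (r+(j+1)) ≤ F (r+(j+1)+g) := ih g (by omega) (j+1) (by omega) (by omega)
        have hidx : r+(j+1)+g = r+j+g+1 := by omega
        have hidx2 : r+(j+1) = r+j+1 := by omega
        rw [hidx, hidx2] at hmid
        rw [Pi.le_def]; intro x
        have hA := hineq' (r+j) (by omega) x
        have hB := hineq' (r+j+g+1) (by omega) x
        have hM := Pi.le_def.mp hmid x
        have hE := hchar' (r+j+g+2) (by omega) x
        have hidx3 : r+j+g+1+1 = r+j+g+2 := by omega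
        rw [hidx3] at hB
        have hdz : (d:ℤ) = (r:ℤ) + 2*j + g + 2 := by exact_mod_cast hd.symm
        push_cast at hA hB
        rw [hdz] at hA hB
        set a := F (r+j) x
        set b := F (r+j+1) x
        set c := F (r+j+g+1) x
        set e := F (r+j+g+2) x
        -- hA : (j+g+2) * a ≤ j * b ; hB : (j+1) * c ≤ (j+g+1) * e
        have hA' : ((j:ℤ)+g+2) * a ≤ (j:ℤ) * b := by linarith [hA]
        have hB' : ((j:ℤ)+1) * c ≤ ((j:ℤ)+g+1) * e := by linarith [hB]
        have hK : (0:ℤ) < ((j:ℤ)+1) * ((j:ℤ)+g+2) := by positivity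
        have key : ((j:ℤ)+1) * ((j:ℤ)+g+2) * a ≤ ((j:ℤ)+1) * ((j:ℤ)+g+2) * e := by
          have t1 : ((j:ℤ)+1) * (((j:ℤ)+g+2) * a) ≤ ((j:ℤ)+1) * ((j:ℤ) * b) :=
            mul_le_mul_of_nonneg_left hA' (by positivity)
          have t2 : ((j:ℤ) * ((j:ℤ)+1)) * b ≤ ((j:ℤ) * ((j:ℤ)+1)) * c :=
            mul_le_mul_of_nonneg_left hM (by positivity)
          have t3 : (j:ℤ) * (((j:ℤ)+1) * c) ≤ (j:ℤ) * (((j:ℤ)+g+1) * e) :=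
            mul_le_mul_of_nonneg_left hB' (by positivity)
          nlinarith [hE]
        have hgoal : a ≤ e := le_of_mul_le_mul_left (by linarith [key]) hK
        have hidx4 : r+j+(g+2) = r+j+g+2 := by omega
        rw [hidx4]
        exact hgoal
  constructor
  · intro j hj
    rcases Nat.eq_zero_or_pos j with h0 | hpos
    · subst h0
      have hrd : r < d := by omega
      rw [Pi.le_def]; intro x
      have h1 := hFr0 hrd x
      have h2 := hchar' (r+0+1) (by omega) x
      simpa using le_trans (by simpa using h1) h2
    · exact step (r+j) (by omega) (by omega) (by omega)
  · intro j hj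
    rcases Nat.eq_zero_or_pos j with h0 | hpos
    · subst h0
      rcases Nat.lt_or_ge r d with hrd | hrd
      · rw [Pi.le_def]; intro x
        have h1 := hFr0 hrd x
        have h2 := hchar' (d-0) (by omega) x
        simpa using le_trans (by simpa using h1) h2
      · have : r = d := le_antisymm hr hrd
        subst this
        simp
    · have h2j : r + 2*j ≤ d := by omega
      obtain ⟨g, hg⟩ : ∃ g, r + 2*j + g = d := ⟨d - (r+2*j), by omega⟩
      have := main g j hpos hg
      have hidx : d - j = r + j + g := by omega
      rw [hidx]
      exact this
end

section
/- Let d ≥ 1 and ℓ ≤ d, and let i ≤ ℓ. For any set T ⊆ [d] with |T| ≥ ℓ, the binomial coefficient C(|T| − (ℓ−i), i) equals the number of subsets R ⊆ T with |R| = ℓ such that the ℓ−i smallest elements of R coincide with the ℓ−i smallest elements of T. -/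
/-- `firstK S k` is the set of the `k` smallest elements of the finite set `S` of
natural numbers. -/
def firstK (S : Finset ℕ) (k : ℕ) : Finset ℕ :=
  ((S.sort (· ≤ ·)).take k).toFinset

lemma firstK_subset (S : Finset ℕ) (k : ℕ) : firstK S k ⊆ S := by
  intro x hx
  rw [firstK, List.mem_toFinset] at hx
  have := List.mem_of_mem_take hx
  rwa [Finset.mem_sort] at this

lemma firstK_card (S : Finset ℕ) (k : ℕ) (h : k ≤ S.card) : (firstK S k).card = k := by
  rw [firstK, List.toFinset_card_of_nodup
    ((S.sort_nodup (· ≤ ·)).sublist (List.take_sublist _ _))]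
  rw [List.length_take, Finset.length_sort]
  omega

lemma firstK_lt (S : Finset ℕ) (k : ℕ) :
    ∀ a ∈ firstK S k, ∀ b ∈ S \ firstK S k, a < b := by
  intro a ha b hb
  rw [Finset.mem_sdiff] at hb
  obtain ⟨hbS, hbF⟩ := hb
  rw [firstK, List.mem_toFinset] at ha hbF
  have hbl : b ∈ S.sort (· ≤ ·) := (Finset.mem_sort _).mpr hbS
  have hbd : b ∈ (S.sort (· ≤ ·)).drop k := by
    have := (List.take_append_drop k (S.sort (· ≤ ·))) ▸ hbl
    rcases List.mem_append.mp this with h | h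
    · exact absurd h hbF
    · exact h
  have hsorted : List.Pairwise (· < ·) (S.sort (· ≤ ·)) := S.sortedLT_sort.pairwise
  have := (List.take_append_drop k (S.sort (· ≤ ·))) ▸ hsorted
  exact (List.pairwise_append.mp this).2.2 a ha b hbd

lemma firstK_eq (S : Finset ℕ) (k : ℕ) (hk : k ≤ S.card) (A : Finset ℕ)
    (hA : A ⊆ S) (hc : A.card = k)
    (hlt : ∀ a ∈ A, ∀ b ∈ S \ A, a < b) : firstK S k = A := by
  by_contra hne
  have hcard : (firstK S k).card = A.card := by rw [firstK_card S k hk, hc]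
  have h1 : ¬ firstK S k ⊆ A := fun h =>
    hne (Finset.eq_of_subset_of_card_le h hcard.ge)
  obtain ⟨a, haF, haA⟩ := Finset.not_subset.mp h1
  have h2 : ¬ A ⊆ firstK S k := fun h =>
    hne (Finset.eq_of_subset_of_card_le h hcard.le).symm
  obtain ⟨b, hbA, hbF⟩ := Finset.not_subset.mp h2
  have hba : b < a := hlt b hbA a (Finset.mem_sdiff.mpr ⟨firstK_subset S k haF, haA⟩)
  have hab : a < b := firstK_lt S k a haF b (Finset.mem_sdiff.mpr ⟨hA hbA, hbF⟩)
  omega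

/-- Let `d ≥ 1`, `ℓ ≤ d`, `i ≤ ℓ`, and `T ⊆ [d]` with `|T| ≥ ℓ`.  Then
`C(|T| - (ℓ-i), i)` equals the number of subsets `R ⊆ T` with `|R| = ℓ` whose `ℓ-i`
smallest elements coincide with the `ℓ-i` smallest elements of `T`. -/
theorem stmt4 (d ℓ i : ℕ) (hd : 1 ≤ d) (hℓ : ℓ ≤ d) (hi : i ≤ ℓ)
    (T : Finset ℕ) (hT : T ⊆ Finset.Icc 1 d) (hTcard : ℓ ≤ T.card) :
    ((T.powersetCard ℓ).filter
        (fun R => firstK R (ℓ - i) = firstK T (ℓ - i))).card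
      = Nat.choose (T.card - (ℓ - i)) i := by
  set k := ℓ - i with hk
  set F := firstK T k with hF
  have hkℓ : k ≤ ℓ := Nat.sub_le ℓ i
  have hFsub : F ⊆ T := firstK_subset T k
  have hFcard : F.card = k := firstK_card T k (hkℓ.trans hTcard)
  have key : ∀ R, R ⊆ T → R.card = ℓ → (firstK R k = F ↔ F ⊆ R) := by
    intro R hRT hRc
    constructor
    · intro h; rw [← h]; exact firstK_subset R k
    · intro h
      refine firstK_eq R k (by omega) F h hFcard ?_
      intro a ha b hb
      rw [Finset.mem_sdiff] at hb
      exact firstK_lt T k a ha b (Finset.mem_sdiff.mpr ⟨hRT hb.1, hb.2⟩)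
  have hkey : ∀ R ∈ T.powersetCard ℓ, (firstK R k = F ↔ F ⊆ R) := by
    intro R hR
    rw [Finset.mem_powersetCard] at hR
    exact key R hR.1 hR.2
  have hcount : ((T.powersetCard ℓ).filter (fun R => firstK R k = F)).card
      = ((T \ F).powersetCard i).card := by
    apply Finset.card_bij' (fun R _ => R \ F) (fun S _ => S ∪ F)
    · intro R hR
      rw [Finset.mem_filter, Finset.mem_powersetCard] at hR
      obtain ⟨⟨hRT, hRc⟩, hfk⟩ := hR
      have hFR : F ⊆ R := (key R hRT hRc).mp hfk
      rw [Finset.mem_powersetCard]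
      constructor
      · exact Finset.sdiff_subset_sdiff hRT (le_refl F)
      · rw [Finset.card_sdiff_of_subset hFR, hRc, hFcard]; omega
    · intro S hS
      rw [Finset.mem_powersetCard] at hS
      obtain ⟨hST, hSc⟩ := hS
      have hdisj : Disjoint S F := by
        intro x hx1 hx2
        intro y hy
        have h1 := hx1 hy
        have h2 := hx2 hy
        have := (Finset.mem_sdiff.mp (hST h1)).2
        exact absurd h2 this
      have hsub : S ∪ F ⊆ T := Finset.union_subset
        (hST.trans (Finset.sdiff_subset)) hFsub
      have hcard : (S ∪ F).card = ℓ := by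
        rw [Finset.card_union_of_disjoint hdisj, hSc, hFcard]; omega
      rw [Finset.mem_filter, Finset.mem_powersetCard]
      exact ⟨⟨hsub, hcard⟩, (key _ hsub hcard).mpr Finset.subset_union_right⟩
    · intro R hR
      rw [Finset.mem_filter, Finset.mem_powersetCard] at hR
      obtain ⟨⟨hRT, hRc⟩, hfk⟩ := hR
      exact Finset.sdiff_union_of_subset ((key R hRT hRc).mp hfk)
    · intro S hS
      rw [Finset.mem_powersetCard] at hS
      have hdisj : Disjoint S F := by
        intro x hx1 hx2
        intro y hy
        exact absurd (hx2 hy) (Finset.mem_sdiff.mp (hS.1 (hx1 hy))).2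
      rw [Finset.union_sdiff_right, Finset.sdiff_eq_self_of_disjoint hdisj]
  rw [hcount, Finset.card_powersetCard, Finset.card_sdiff_of_subset hFsub, hFcard]
end

section
/- Let Φ be a relative simplicial complex with presentation (Δ, Γ) satisfying Serre's condition (S_ℓ), and let σ ∈ Δ. Then the relative complex lk_Φ(σ) = (lk_Δ(σ), lk_Γ(σ)) also satisfies Serre's condition (S_ℓ). -/
open Finset

variable {V : Type*}

/-- A (possibly empty-face-containing) simplicial complex: downward closed family
of finite subsets of `V`. -/
def IsComplex (Δ : Finset V → Prop) : Prop :=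
  ∀ ⦃σ τ : Finset V⦄, σ ⊆ τ → Δ τ → Δ σ

/-- A chain (element of the simplicial chain module with `ℂ` coefficients) is
supported on the faces of `K`. -/
def SupportedOn (K : Finset V → Prop) (c : Finset V →₀ ℂ) : Prop :=
  ∀ σ ∈ c.support, K σ

/-- A chain is supported on the faces of `K` of cardinality `n`
(i.e. of dimension `n-1`). -/
def SupportedOnCard (K : Finset V → Prop) (n : ℕ) (c : Finset V →₀ ℂ) : Prop :=
  ∀ σ ∈ c.support, K σ ∧ σ.card = n

/-- The simplicial boundary operator on chains, with orientation determined by the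
linear order on `V`: `∂σ = ∑_{v ∈ σ} (-1)^{#{u ∈ σ : u < v}} (σ ∖ v)`.  Faces of
cardinality `0` (the empty face) are included, so this computes *reduced*
(relative) homology. -/
noncomputable def bdry [LinearOrder V] :
    (Finset V →₀ ℂ) →ₗ[ℂ] (Finset V →₀ ℂ) :=
  Finsupp.lsum ℂ fun σ => LinearMap.toSpanSingleton ℂ _
    (∑ v ∈ σ, ((-1 : ℂ) ^ ((σ.filter (fun u => u < v)).card)) •
      Finsupp.single (σ.erase v) (1 : ℂ))

/-- Vanishing of the relative reduced homology `H̃_{n-1}(Δ, Γ)` (with `ℂ`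
coefficients; `n` is the cardinality of the faces, `n-1` their dimension):
every relative cycle of the pair is a relative boundary. -/
def RelHomologyZero [LinearOrder V] (Δ Γ : Finset V → Prop) (n : ℕ) : Prop :=
  ∀ c : Finset V →₀ ℂ, SupportedOnCard Δ n c → SupportedOn Γ (bdry c) →
    ∃ b g : Finset V →₀ ℂ, SupportedOnCard Δ (n + 1) b ∧ SupportedOnCard Γ n g ∧
      bdry b = c + g

/-- The link of a face `σ` in `K`. -/
def link [DecidableEq V] (K : Finset V → Prop) (σ : Finset V) : Finset V → Prop :=
  fun τ => Disjoint τ σ ∧ K (τ ∪ σ)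

/-- The relative complex `Δ ∖ Γ` has dimension at least `n` (some face of the
relative complex has cardinality at least `n+1`). -/
def RelDimAtLeast (Δ Γ : Finset V → Prop) (n : ℕ) : Prop :=
  ∃ τ : Finset V, Δ τ ∧ ¬ Γ τ ∧ n + 1 ≤ τ.card

/-- Serre's condition `(S_ℓ)` for the relative simplicial complex with presentation
`(Δ, Γ)`: for every `σ ∈ Δ`, the relative reduced homology
`H̃_{i-1}(lk_Δ(σ), lk_Γ(σ))` vanishes for all `i ≤ min(dim lk_Φ(σ), ℓ - 1)`. -/
def SerreS [LinearOrder V] (Δ Γ : Finset V → Prop) (ℓ : ℕ) : Prop :=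
  ∀ σ : Finset V, Δ σ → ∀ i : ℕ, i + 1 ≤ ℓ →
    RelDimAtLeast (link Δ σ) (link Γ σ) i →
      RelHomologyZero (link Δ σ) (link Γ σ) i


lemma link_link [DecidableEq V] (K : Finset V → Prop) (σ τ : Finset V)
    (h : Disjoint τ σ) : link (link K σ) τ = link K (τ ∪ σ) := by
  funext ρ
  apply propext
  constructor
  · rintro ⟨h1, h2, h3⟩
    refine ⟨?_, by rwa [← union_assoc]⟩
    rw [disjoint_union_right]
    exact ⟨h1, (disjoint_union_left.1 h2).1⟩
  · rintro ⟨h1, h2⟩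
    obtain ⟨h3, h4⟩ := disjoint_union_right.1 h1
    exact ⟨h3, disjoint_union_left.2 ⟨h4, h⟩, by rwa [union_assoc]⟩

/-- If the relative simplicial complex with presentation `(Δ, Γ)`
satisfies Serre's condition `(S_ℓ)` and `σ ∈ Δ`, then the relative complex
`lk_Φ(σ) = (lk_Δ(σ), lk_Γ(σ))` also satisfies Serre's condition `(S_ℓ)`. -/
theorem stmt7 [LinearOrder V] (Δ Γ : Finset V → Prop)
    (hΔ : IsComplex Δ) (hΓ : IsComplex Γ) (hsub : ∀ σ, Γ σ → Δ σ)
    (ℓ : ℕ) (hS : SerreS Δ Γ ℓ) (σ : Finset V) (hσ : Δ σ) :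
    SerreS (link Δ σ) (link Γ σ) ℓ := by
  rintro τ ⟨hdisj, hΔτσ⟩ i hi hdim
  rw [link_link Δ σ τ hdisj, link_link Γ σ τ hdisj] at hdim ⊢
  exact hS (τ ∪ σ) hΔτσ i hi hdim
end

section
/- Let Φ be a balanced relative simplicial complex of dimension d−1 with coloring κ: V → [d], satisfying Serre's condition (S_ℓ). Then for every S ⊆ [d], the restriction Φ|_S = {σ ∈ Φ : κ(σ) ⊆ S} also satisfies Serre's condition (S_ℓ). In particular if Φ is relatively Cohen–Macaulay then so is Φ|_S. -/
open Finset

variable {V : Type*}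

/-- A balanced relative simplicial complex of dimension `d-1` on vertex set `V`,
with coloring `κ : V → Fin d`: a nonempty family `Φ` such that (1) `ρ ⊆ σ ⊆ τ` with
`ρ, τ ∈ Φ` implies `σ ∈ Φ`, (2) every face is contained in a face of cardinality `d`,
and (3) `κ` is injective on every face. -/
def BalancedRel {d : ℕ} (Φ : Finset V → Prop) (κ : V → Fin d) : Prop :=
  (∃ σ, Φ σ) ∧
  (∀ ρ σ τ : Finset V, ρ ⊆ σ → σ ⊆ τ → Φ ρ → Φ τ → Φ σ) ∧
  (∀ ρ, Φ ρ → ∃ σ, Φ σ ∧ ρ ⊆ σ ∧ σ.card = d) ∧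
  (∀ ρ, Φ ρ → ∀ u ∈ ρ, ∀ v ∈ ρ, κ u = κ v → u = v)

/-- The combinatorial closure of `Φ`: its canonical presentation is
`(closureOf Φ, closureOf Φ ∖ Φ)`. -/
def closureOf (Φ : Finset V → Prop) : Finset V → Prop :=
  fun σ => ∃ τ, Φ τ ∧ σ ⊆ τ

/-- Serre's condition `(S_ℓ)` for a relative simplicial complex `Φ`, via its
canonical presentation. -/
def SerreRel [LinearOrder V] (Φ : Finset V → Prop) (ℓ : ℕ) : Prop :=
  SerreS (closureOf Φ) (fun σ => closureOf Φ σ ∧ ¬ Φ σ) ℓ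

/-- The color-restriction `Φ|_S`: faces of `Φ` all of whose colors lie in `S`. -/
def restrictC [DecidableEq V] {d : ℕ} (Φ : Finset V → Prop) (κ : V → Fin d)
    (S : Finset (Fin d)) : Finset V → Prop :=
  fun σ => Φ σ ∧ ∀ v ∈ σ, κ v ∈ S

open scoped Classical

section Kit
variable [LinearOrder V]

noncomputable def sgn (τ : Finset V) (v : V) : ℂ :=
  (-1) ^ ((τ.filter (fun u => u < v)).card)

lemma sgn_mul_self (τ : Finset V) (v : V) : sgn τ v * sgn τ v = 1 := by
  simp [sgn, ← pow_add, ← two_mul, pow_mul]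

lemma sgn_erase (τ : Finset V) (v : V) : sgn (τ.erase v) v = sgn τ v := by
  unfold sgn
  congr 1
  congr 1
  ext u
  simp only [mem_filter, mem_erase]
  constructor
  · rintro ⟨⟨_, hu⟩, hlt⟩; exact ⟨hu, hlt⟩
  · rintro ⟨hu, hlt⟩; exact ⟨⟨ne_of_lt hlt, hu⟩, hlt⟩

lemma sgn_insert_not_lt (τ : Finset V) (v : V) : sgn (insert v τ) v = sgn τ v := by
  unfold sgn
  rw [filter_insert]
  simp

lemma bdry_single (τ : Finset V) (a : ℂ) :
    bdry (Finsupp.single τ a) =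
      ∑ v ∈ τ, (a * sgn τ v) • Finsupp.single (τ.erase v) (1 : ℂ) := by
  rw [bdry, Finsupp.lsum_single, LinearMap.toSpanSingleton_apply, Finset.smul_sum]
  refine Finset.sum_congr rfl fun v _ => ?_
  rw [smul_smul]; rfl

/-- projection onto faces satisfying `P`. -/
noncomputable def pr (P : Finset V → Prop) : (Finset V →₀ ℂ) →ₗ[ℂ] (Finset V →₀ ℂ) :=
  Finsupp.lsum ℂ fun τ =>
    if P τ then LinearMap.toSpanSingleton ℂ _ (Finsupp.single τ (1 : ℂ)) else 0

lemma pr_single (P : Finset V → Prop) (τ : Finset V) (a : ℂ) :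
    pr P (Finsupp.single τ a) = if P τ then Finsupp.single τ a else 0 := by
  rw [pr, Finsupp.lsum_single]
  split_ifs with h <;> simp [LinearMap.toSpanSingleton_apply, Finsupp.smul_single']

lemma pr_apply (P : Finset V → Prop) (x : Finset V →₀ ℂ) (ρ : Finset V) :
    pr P x ρ = if P ρ then x ρ else 0 := by
  induction x using Finsupp.induction_linear with
  | zero => simp
  | add f g hf hg =>
      rw [map_add, Finsupp.add_apply, hf, hg, Finsupp.add_apply]
      split_ifs <;> simp
  | single τ a =>
      rw [pr_single]
      classical
      rcases eq_or_ne τ ρ with rfl | hne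
      · split_ifs <;> simp_all
      · rw [Finsupp.single_apply, if_neg hne]
        split_ifs <;> simp [Finsupp.single_apply, hne]

lemma pr_apply_of (P : Finset V → Prop) (x : Finset V →₀ ℂ) (ρ : Finset V) (h : P ρ) :
    pr P x ρ = x ρ := by rw [pr_apply, if_pos h]

lemma pr_support {P : Finset V → Prop} {x : Finset V →₀ ℂ} {ρ : Finset V}
    (h : ρ ∈ (pr P x).support) : ρ ∈ x.support ∧ P ρ := by
  rw [Finsupp.mem_support_iff, pr_apply] at h
  split_ifs at h with hP
  · exact ⟨Finsupp.mem_support_iff.2 h, hP⟩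
  · simp at h

lemma pr_add_pr_not (P : Finset V → Prop) (x : Finset V →₀ ℂ) :
    pr P x + pr (fun τ => ¬ P τ) x = x := by
  ext ρ
  rw [Finsupp.add_apply, pr_apply, pr_apply]
  by_cases h : P ρ <;> simp [h]

lemma pr_eq_zero_of (P : Finset V → Prop) (x : Finset V →₀ ℂ)
    (h : ∀ ρ ∈ x.support, ¬ P ρ) : pr P x = 0 := by
  ext ρ
  rw [pr_apply]
  split_ifs with hP
  · by_contra hne
    exact h ρ (Finsupp.mem_support_iff.2 (by simpa using hne)) hP
  · rfl

lemma pr_eq_zero_iff (P : Finset V → Prop) (x : Finset V →₀ ℂ) :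
    pr P x = 0 ↔ ∀ ρ ∈ x.support, ¬ P ρ := by
  constructor
  · intro h ρ hρ hP
    have := congrArg (fun y : Finset V →₀ ℂ => y ρ) h
    simp only [pr_apply, if_pos hP, Finsupp.coe_zero, Pi.zero_apply] at this
    exact Finsupp.mem_support_iff.1 hρ this
  · exact pr_eq_zero_of P x

lemma pr_eq_self_of (P : Finset V → Prop) (x : Finset V →₀ ℂ)
    (h : ∀ ρ ∈ x.support, P ρ) : pr P x = x := by
  ext ρ
  rw [pr_apply]
  split_ifs with hP
  · rfl
  · by_contra hne
    exact hP (h ρ (Finsupp.mem_support_iff.2 fun hz => hne hz.symm))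

lemma pr_pr_of_imp {P Q : Finset V → Prop} (h : ∀ ρ, P ρ → Q ρ) (x : Finset V →₀ ℂ) :
    pr P (pr Q x) = pr P x := by
  ext ρ
  rw [pr_apply, pr_apply, pr_apply]
  split_ifs with h1 h2
  · rfl
  · exact absurd (h ρ h1) h2
  · rfl

lemma mem_support_bdry {x : Finset V →₀ ℂ} {ρ : Finset V}
    (h : ρ ∈ (bdry x).support) : ∃ τ ∈ x.support, ∃ v ∈ τ, ρ = τ.erase v := by
  classical
  rw [Finsupp.mem_support_iff] at h
  by_contra hcon
  push_neg at hcon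
  apply h
  conv_lhs => rw [← Finsupp.sum_single x]
  rw [Finsupp.sum, map_sum, Finsupp.finset_sum_apply]
  refine Finset.sum_eq_zero fun τ hτ => ?_
  rw [bdry_single, Finsupp.finset_sum_apply]
  refine Finset.sum_eq_zero fun v hv => ?_
  rw [Finsupp.smul_apply, Finsupp.single_apply]
  rw [if_neg (fun he => hcon τ hτ v hv he.symm), smul_zero]

end Kit
section Kit2
variable [LinearOrder V]

noncomputable def cone (v : V) : (Finset V →₀ ℂ) →ₗ[ℂ] (Finset V →₀ ℂ) :=
  Finsupp.lsum ℂ fun τ => LinearMap.toSpanSingleton ℂ _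
    (sgn τ v • Finsupp.single (insert v τ) (1 : ℂ))

noncomputable def unjoin (v : V) : (Finset V →₀ ℂ) →ₗ[ℂ] (Finset V →₀ ℂ) :=
  Finsupp.lsum ℂ fun τ => LinearMap.toSpanSingleton ℂ _
    (sgn τ v • Finsupp.single (τ.erase v) (1 : ℂ))

lemma cone_single (v : V) (τ : Finset V) (a : ℂ) :
    cone v (Finsupp.single τ a) = (a * sgn τ v) • Finsupp.single (insert v τ) (1 : ℂ) := by
  rw [cone, Finsupp.lsum_single, LinearMap.toSpanSingleton_apply, smul_smul]

lemma unjoin_single (v : V) (τ : Finset V) (a : ℂ) :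
    unjoin v (Finsupp.single τ a) = (a * sgn τ v) • Finsupp.single (τ.erase v) (1 : ℂ) := by
  rw [unjoin, Finsupp.lsum_single, LinearMap.toSpanSingleton_apply, smul_smul]

lemma sgn_swap {τ : Finset V} {u v : V} (hu : u ∈ τ) (hv : v ∉ τ) :
    sgn τ v * sgn (insert v τ) u = -(sgn τ u * sgn (τ.erase u) v) := by
  have hne : u ≠ v := fun h => hv (h ▸ hu)
  have h1 : (insert v τ).filter (fun w => w < u) =
      if v < u then insert v (τ.filter (fun w => w < u)) else τ.filter (fun w => w < u) :=
    filter_insert _ v τ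
  have h2 : (τ.erase u).filter (fun w => w < v) = (τ.filter (fun w => w < v)).erase u := by
    rw [filter_erase]
  unfold sgn
  rw [h1, h2]
  rcases lt_trichotomy u v with hlt | heq | hgt
  · rw [if_neg (asymm hlt)]
    have huf : u ∈ τ.filter (fun w => w < v) := mem_filter.2 ⟨hu, hlt⟩
    rw [card_erase_of_mem huf]
    have hA : 0 < (τ.filter (fun w => w < v)).card := card_pos.2 ⟨u, huf⟩
    have hpow : ((-1 : ℂ)) ^ (τ.filter (fun w => w < v)).card
        = (-1) ^ ((τ.filter (fun w => w < v)).card - 1) * (-1) := by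
      conv_lhs => rw [(Nat.succ_pred_eq_of_pos hA).symm]
      rw [pow_succ, Nat.pred_eq_sub_one]
    rw [hpow]
    ring
  · exact absurd heq hne
  · rw [if_pos hgt]
    have hvf : v ∉ τ.filter (fun w => w < u) := fun h => hv (mem_filter.1 h).1
    rw [card_insert_of_notMem hvf, pow_succ]
    have huf : u ∉ τ.filter (fun w => w < v) := by
      intro h; exact absurd (mem_filter.1 h).2 (asymm hgt)
    rw [erase_eq_of_notMem huf]
    ring

lemma bdry_cone_single {v : V} {τ : Finset V} (hv : v ∉ τ) (a : ℂ) :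
    bdry (cone v (Finsupp.single τ a)) =
      Finsupp.single τ a - cone v (bdry (Finsupp.single τ a)) := by
  rw [cone_single, map_smul, bdry_single, bdry_single, map_sum, Finset.smul_sum]
  rw [Finset.sum_insert hv]
  have hterm1 : (a * sgn τ v) • ((1 : ℂ) * sgn (insert v τ) v) •
      Finsupp.single ((insert v τ).erase v) (1 : ℂ) = Finsupp.single τ a := by
    rw [erase_insert hv, sgn_insert_not_lt, smul_smul, one_mul,
      mul_assoc, sgn_mul_self, mul_one, Finsupp.smul_single', mul_one]
  rw [hterm1]
  have hterm2 : ∀ u ∈ τ, (a * sgn τ v) • ((1:ℂ) * sgn (insert v τ) u) •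
        Finsupp.single ((insert v τ).erase u) (1 : ℂ)
      = - (cone v ((a * sgn τ u) • Finsupp.single (τ.erase u) (1 : ℂ))) := by
    intro u hu
    have hne : v ≠ u := fun h => hv (h ▸ hu)
    rw [map_smul, cone_single, erase_insert_of_ne hne, smul_smul, smul_smul, ← neg_smul]
    congr 1
    have h4 := sgn_swap hu hv
    linear_combination a * h4
  rw [Finset.sum_congr rfl hterm2]
  rw [Finset.sum_neg_distrib, sub_eq_add_neg]

lemma bdry_cone {v : V} {x : Finset V →₀ ℂ} (hx : ∀ τ ∈ x.support, v ∉ τ) :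
    bdry (cone v x) = x - cone v (bdry x) := by
  conv_lhs => rw [← Finsupp.sum_single x]
  conv_rhs => rw [← Finsupp.sum_single x]
  rw [Finsupp.sum, map_sum, map_sum, map_sum, map_sum]
  rw [← Finset.sum_sub_distrib]
  exact Finset.sum_congr rfl fun τ hτ => bdry_cone_single (hx τ hτ) (x τ)

lemma cone_unjoin {v : V} {x : Finset V →₀ ℂ} (hx : ∀ τ ∈ x.support, v ∈ τ) :
    cone v (unjoin v x) = x := by
  conv_rhs => rw [← Finsupp.sum_single x]
  conv_lhs => rw [← Finsupp.sum_single x]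
  rw [Finsupp.sum, map_sum, map_sum]
  refine Finset.sum_congr rfl fun τ hτ => ?_
  rw [unjoin_single, map_smul, cone_single, one_mul, smul_smul,
    insert_erase (hx τ hτ), sgn_erase, mul_assoc, sgn_mul_self, mul_one,
    Finsupp.smul_single', mul_one]

lemma unjoin_support {v : V} {x : Finset V →₀ ℂ} {ρ : Finset V}
    (h : ρ ∈ (unjoin v x).support) : ∃ τ ∈ x.support, ρ = τ.erase v := by
  classical
  rw [Finsupp.mem_support_iff] at h
  by_contra hcon
  push_neg at hcon
  apply h
  conv_lhs => rw [← Finsupp.sum_single x]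
  rw [Finsupp.sum, map_sum, Finsupp.finset_sum_apply]
  refine Finset.sum_eq_zero fun τ hτ => ?_
  rw [unjoin_single, Finsupp.smul_apply, Finsupp.single_apply,
    if_neg (fun he => hcon τ hτ he.symm), smul_zero]

lemma cone_support {v : V} {x : Finset V →₀ ℂ} {ρ : Finset V}
    (h : ρ ∈ (cone v x).support) : v ∈ ρ ∧ ∃ τ ∈ x.support, ρ = insert v τ := by
  classical
  rw [Finsupp.mem_support_iff] at h
  by_contra hcon
  apply h
  conv_lhs => rw [← Finsupp.sum_single x]
  rw [Finsupp.sum, map_sum, Finsupp.finset_sum_apply]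
  refine Finset.sum_eq_zero fun τ hτ => ?_
  rw [cone_single, Finsupp.smul_apply, Finsupp.single_apply]
  rw [if_neg, smul_zero]
  intro he
  exact hcon ⟨he ▸ mem_insert_self v τ, τ, hτ, he.symm⟩

lemma cone_apply_insert {v : V} {x : Finset V →₀ ℂ} (hx : ∀ τ ∈ x.support, v ∉ τ)
    {ρ : Finset V} (hρ : v ∉ ρ) :
    cone v x (insert v ρ) = sgn ρ v * x ρ := by
  classical
  conv_lhs => rw [← Finsupp.sum_single x]
  rw [Finsupp.sum, map_sum, Finsupp.finset_sum_apply]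
  by_cases hmem : ρ ∈ x.support
  · rw [Finset.sum_eq_single_of_mem ρ hmem]
    · rw [cone_single, Finsupp.smul_apply, Finsupp.single_apply, if_pos rfl]
      simp [mul_comm]
    · intro τ hτ hne
      rw [cone_single, Finsupp.smul_apply, Finsupp.single_apply, if_neg, smul_zero]
      intro he
      apply hne
      have : (insert v τ).erase v = (insert v ρ).erase v := by rw [he]
      rwa [erase_insert (hx τ hτ), erase_insert hρ] at this
  · rw [Finsupp.notMem_support_iff.1 hmem, mul_zero]
    refine Finset.sum_eq_zero fun τ hτ => ?_
    rw [cone_single, Finsupp.smul_apply, Finsupp.single_apply, if_neg, smul_zero]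
    intro he
    apply hmem
    have h3 : (insert v τ).erase v = (insert v ρ).erase v := by rw [he]
    rw [erase_insert (hx τ hτ), erase_insert hρ] at h3
    exact h3 ▸ hτ

end Kit2

section Comb
variable [LinearOrder V] {d : ℕ} {Φ : Finset V → Prop} {κ : V → Fin d}

def psi (Φ : Finset V → Prop) (κ : V → Fin d) (S : Finset (Fin d)) (σ : Finset V) :
    Finset V → Prop :=
  fun τ => Disjoint τ σ ∧ Φ (τ ∪ σ) ∧ ∀ v ∈ τ, κ v ∈ S

lemma balanced_inj (hbal : BalancedRel Φ κ) {ρ τ : Finset V} (hsub : τ ⊆ ρ) (hρ : Φ ρ)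
    {u v : V} (hu : u ∈ τ) (hv : v ∈ τ) (huv : κ u = κ v) : u = v :=
  hbal.2.2.2 ρ hρ u (hsub hu) v (hsub hv) huv

lemma psi_card_le (hbal : BalancedRel Φ κ) {S : Finset (Fin d)} {σ τ : Finset V}
    (h : psi Φ κ S σ τ) : τ.card ≤ (S \ σ.image κ).card := by
  classical
  have hinj : Set.InjOn κ ↑τ := by
    intro u hu v hv huv
    exact balanced_inj hbal (subset_union_left) h.2.1 (by simpa using hu) (by simpa using hv) huv
  have himg : τ.image κ ⊆ S \ σ.image κ := by
    intro x hx
    obtain ⟨v, hv, rfl⟩ := mem_image.1 hx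
    rw [mem_sdiff]
    refine ⟨h.2.2 v hv, fun hmem => ?_⟩
    obtain ⟨u, hu, huv⟩ := mem_image.1 hmem
    have : u = v := balanced_inj hbal (Finset.Subset.refl _) h.2.1
      (mem_union_right _ hu) (mem_union_left _ hv) huv
    exact (Finset.disjoint_left.1 h.1) hv (this ▸ hu)
  calc τ.card = (τ.image κ).card := (card_image_of_injOn hinj).symm
    _ ≤ _ := card_le_card himg

lemma psi_ext (hbal : BalancedRel Φ κ) {S : Finset (Fin d)} {σ τ₀ : Finset V}
    (h : psi Φ κ S σ τ₀) :
    ∃ τ₁, psi Φ κ S σ τ₁ ∧ (S \ σ.image κ).card ≤ τ₁.card := by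
  classical
  obtain ⟨ρ, hρΦ, hsub, hcard⟩ := hbal.2.2.1 (τ₀ ∪ σ) h.2.1
  set τ₁ : Finset V := (ρ.filter (fun w => κ w ∈ S)) \ σ with hτ₁
  have hρinj : Set.InjOn κ ↑ρ := fun u hu v hv huv =>
    hbal.2.2.2 ρ hρΦ u (by simpa using hu) v (by simpa using hv) huv
  have himgρ : ρ.image κ = univ := by
    apply Finset.eq_univ_of_card
    rw [card_image_of_injOn hρinj, hcard, Fintype.card_fin]
  have hστ : σ ⊆ ρ := (subset_union_right).trans hsub
  have hτ₀ρ : τ₀ ⊆ ρ := (subset_union_left).trans hsub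
  have hτ₀τ₁ : τ₀ ⊆ τ₁ := by
    intro x hx
    rw [hτ₁, mem_sdiff, mem_filter]
    exact ⟨⟨hτ₀ρ hx, h.2.2 x hx⟩, fun hxσ => (Finset.disjoint_left.1 h.1) hx hxσ⟩
  have hτ₁ρ : τ₁ ⊆ ρ := (sdiff_subset).trans (filter_subset _ _)
  have hΦτ₁ : Φ (τ₁ ∪ σ) := by
    refine hbal.2.1 (τ₀ ∪ σ) (τ₁ ∪ σ) ρ (union_subset_union_left hτ₀τ₁)
      (union_subset hτ₁ρ hστ) h.2.1 hρΦ
  refine ⟨τ₁, ⟨sdiff_disjoint, hΦτ₁, fun v hv => ?_⟩, ?_⟩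
  · rw [hτ₁, mem_sdiff, mem_filter] at hv
    exact hv.1.2
  · have hsubimg : S \ σ.image κ ⊆ τ₁.image κ := by
      intro x hx
      rw [mem_sdiff] at hx
      have : x ∈ ρ.image κ := himgρ ▸ mem_univ x
      obtain ⟨w, hw, rfl⟩ := mem_image.1 this
      refine mem_image.2 ⟨w, ?_, rfl⟩
      rw [hτ₁, mem_sdiff, mem_filter]
      exact ⟨⟨hw, hx.1⟩, fun hwσ => hx.2 (mem_image.2 ⟨w, hwσ, rfl⟩)⟩
    calc (S \ σ.image κ).card ≤ (τ₁.image κ).card := card_le_card hsubimg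
      _ ≤ τ₁.card := card_image_le

lemma main_base (hbal : BalancedRel Φ κ) {ℓ : ℕ} (hS : SerreRel Φ ℓ)
    {σ : Finset V} {S : Finset (Fin d)} {i : ℕ}
    (hcov : ∀ j : Fin d, j ∈ S ∨ j ∈ σ.image κ) (hiℓ : i + 1 ≤ ℓ)
    (hdim : ∃ τw, psi Φ κ S σ τw ∧ i + 1 ≤ τw.card) :
    ∀ z, SupportedOnCard (psi Φ κ S σ) i z →
      (∀ ρ ∈ (bdry z).support, ¬ psi Φ κ S σ ρ) →
      ∃ b, SupportedOnCard (psi Φ κ S σ) (i+1) b ∧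
        ∀ ρ ∈ (bdry b - z).support, ¬ psi Φ κ S σ ρ := by
  classical
  intro z hz hzc
  obtain ⟨τw, hτw, hτwc⟩ := hdim
  -- characterization of psi in the covering case
  have hchar : ∀ τ, psi Φ κ S σ τ ↔ (Disjoint τ σ ∧ Φ (τ ∪ σ)) := by
    intro τ
    constructor
    · exact fun h => ⟨h.1, h.2.1⟩
    · rintro ⟨h1, h2⟩
      refine ⟨h1, h2, fun v hv => ?_⟩
      rcases hcov (κ v) with hin | hin
      · exact hin
      · obtain ⟨u, hu, huv⟩ := mem_image.1 hin
        have : u = v := balanced_inj hbal (Finset.Subset.refl _) h2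
          (mem_union_right _ hu) (mem_union_left _ hv) huv.symm.symm
        exact absurd (this ▸ hu) (Finset.disjoint_left.1 h1 hv)
  have hσcl : closureOf Φ σ := ⟨τw ∪ σ, hτw.2.1, subset_union_right⟩
  have hrel : RelDimAtLeast (link (closureOf Φ) σ)
      (link (fun τ => closureOf Φ τ ∧ ¬ Φ τ) σ) i := by
    refine ⟨τw, ⟨hτw.1, τw ∪ σ, hτw.2.1, Finset.Subset.refl _⟩, ?_, hτwc⟩
    rintro ⟨-, -, hnΦ⟩
    exact hnΦ hτw.2.1
  have hRHZ := hS σ hσcl i hiℓ hrel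
  have hzΔ : SupportedOnCard (link (closureOf Φ) σ) i z := by
    intro τ hτ
    obtain ⟨hψ, hc⟩ := hz τ hτ
    exact ⟨⟨hψ.1, τ ∪ σ, hψ.2.1, Finset.Subset.refl _⟩, hc⟩
  have hzΓ : SupportedOn (link (fun τ => closureOf Φ τ ∧ ¬ Φ τ) σ) (bdry z) := by
    intro ρ hρ
    obtain ⟨τ, hτ, v, hv, rfl⟩ := mem_support_bdry hρ
    have hψτ := (hz τ hτ).1
    have hdisj : Disjoint (τ.erase v) σ := disjoint_of_subset_left (erase_subset _ _) hψτ.1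
    have hsub : τ.erase v ∪ σ ⊆ τ ∪ σ := union_subset_union_left (erase_subset _ _)
    refine ⟨hdisj, ⟨τ ∪ σ, hψτ.2.1, hsub⟩, fun hΦe => ?_⟩
    exact hzc _ hρ ⟨hdisj, hΦe, fun u hu => hψτ.2.2 u (mem_of_mem_erase hu)⟩
  obtain ⟨b, g, hb, hg, heq⟩ := hRHZ z hzΔ hzΓ
  refine ⟨pr (psi Φ κ S σ) b, ?_, ?_⟩
  · intro τ hτ
    obtain ⟨hτb, hψ⟩ := pr_support hτ
    exact ⟨hψ, (hb τ hτb).2⟩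
  · intro ρ hρ hψρ
    rw [Finsupp.mem_support_iff] at hρ
    apply hρ
    have hsplit : bdry (pr (psi Φ κ S σ) b) - z
        = (g : Finset V →₀ ℂ) - bdry (pr (fun τ => ¬ psi Φ κ S σ τ) b) := by
      have h1 : bdry b = bdry (pr (psi Φ κ S σ) b) + bdry (pr (fun τ => ¬ psi Φ κ S σ τ) b) := by
        rw [← map_add, pr_add_pr_not]
      have h2 := heq
      rw [h1] at h2
      -- z + g = pr + prnot
      linear_combination (norm := abel) h2
    rw [hsplit, Finsupp.sub_apply]
    have hgz : g ρ = 0 := by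
      by_contra hne
      have := hg ρ (Finsupp.mem_support_iff.2 hne)
      exact this.1.2.2 hψρ.2.1
    have hbz : bdry (pr (fun τ => ¬ psi Φ κ S σ τ) b) ρ = 0 := by
      by_contra hne
      obtain ⟨τ, hτ, v, hv, he⟩ := mem_support_bdry (Finsupp.mem_support_iff.2 hne)
      obtain ⟨hτb, hnψ⟩ := pr_support hτ
      apply hnψ
      have hlink := (hb τ hτb).1
      obtain ⟨ρ₂, hρ₂Φ, hρ₂s⟩ := hlink.2
      rw [hchar]
      refine ⟨hlink.1, ?_⟩
      refine hbal.2.1 (ρ ∪ σ) (τ ∪ σ) ρ₂ ?_ hρ₂s hψρ.2.1 hρ₂Φ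
      rw [he]
      exact union_subset_union_left (erase_subset _ _)
    rw [hgz, hbz, sub_zero]
end Comb
section Main
variable [LinearOrder V] {d : ℕ} {Φ : Finset V → Prop} {κ : V → Fin d}

lemma main (hbal : BalancedRel Φ κ) {ℓ : ℕ} (hS : SerreRel Φ ℓ) :
    ∀ (μ : ℕ) (σ : Finset V) (S : Finset (Fin d)) (i : ℕ),
      (univ \ (S ∪ σ.image κ)).card ≤ μ → i + 1 ≤ ℓ →
      (∃ τw, psi Φ κ S σ τw ∧ i + 1 ≤ τw.card) →
      ∀ z, SupportedOnCard (psi Φ κ S σ) i z →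
        (∀ ρ ∈ (bdry z).support, ¬ psi Φ κ S σ ρ) →
        ∃ b, SupportedOnCard (psi Φ κ S σ) (i+1) b ∧
          ∀ ρ ∈ (bdry b - z).support, ¬ psi Φ κ S σ ρ := by
  classical
  intro μ
  induction μ with
  | zero =>
      intro σ S i hμ hiℓ hdim
      refine main_base hbal hS ?_ hiℓ hdim
      intro j
      by_contra hj
      push_neg at hj
      have hmem : j ∈ univ \ (S ∪ σ.image κ) := by
        rw [mem_sdiff, mem_union]
        exact ⟨mem_univ j, by tauto⟩
      have := card_pos.2 ⟨j, hmem⟩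
      omega
  | succ μ ih =>
      intro σ S i hμ hiℓ hdim
      by_cases hle : (univ \ (S ∪ σ.image κ)).card ≤ μ
      · exact ih σ S i hle hiℓ hdim
      · obtain ⟨c, hc⟩ := card_pos.1 (by omega : 0 < (univ \ (S ∪ σ.image κ)).card)
        rw [mem_sdiff, mem_union] at hc
        push_neg at hc
        obtain ⟨-, hcS, hcσ⟩ := hc
        intro z hz hzc
        have hmono : ∀ τ, psi Φ κ S σ τ → psi Φ κ (insert c S) σ τ := by
          rintro τ ⟨h1, h2, h3⟩
          exact ⟨h1, h2, fun v hv => mem_insert_of_mem (h3 v hv)⟩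
        have hcmem : c ∈ univ \ (S ∪ σ.image κ) := by
          rw [mem_sdiff, mem_union]; exact ⟨mem_univ _, by tauto⟩
        have hmeas1 : (univ \ (insert c S ∪ σ.image κ)).card ≤ μ := by
          have heq : univ \ (insert c S ∪ σ.image κ) = (univ \ (S ∪ σ.image κ)).erase c := by
            ext j
            simp only [mem_sdiff, mem_union, mem_erase, mem_insert, mem_univ, true_and]
            tauto
          rw [heq, card_erase_of_mem hcmem]
          omega
        have huniq : ∀ τ : Finset V, Φ (τ ∪ σ) → ∀ v ∈ τ, κ v = c → ∀ w ∈ τ, κ w = c → v = w :=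
          fun τ hΦ v hv hvc w hw hwc =>
            balanced_inj hbal subset_union_left hΦ hv hw (by rw [hvc, hwc])
        -- A: z is a cycle for S' := insert c S
        have hzc' : ∀ ρ ∈ (bdry z).support, ¬ psi Φ κ (insert c S) σ ρ := by
          intro ρ hρ hψ
          obtain ⟨τ, hτ, v, hv, rfl⟩ := mem_support_bdry hρ
          have hψτ := (hz τ hτ).1
          exact hzc _ hρ ⟨disjoint_of_subset_left (erase_subset _ _) hψτ.1, hψ.2.1,
            fun u hu => hψτ.2.2 u (mem_of_mem_erase hu)⟩
        obtain ⟨τw, hτw, hτwc⟩ := hdim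
        -- B: apply IH for S'
        obtain ⟨bp, hbp, hcycp⟩ := ih σ (insert c S) i hmeas1 hiℓ ⟨τw, hmono _ hτw, hτwc⟩ z
          (fun τ hτ => ⟨hmono _ (hz τ hτ).1, (hz τ hτ).2⟩) hzc'
        -- C: split bp into color-c-free part and vertex parts
        set b₀ : Finset V →₀ ℂ := pr (fun τ => ¬ ∃ v ∈ τ, κ v = c) bp with hb₀def
        set T : Finset V :=
          (pr (fun τ => ∃ v ∈ τ, κ v = c) bp).support.biUnion
            (fun τ => τ.filter (fun w => κ w = c)) with hTdef
        set r : V → (Finset V →₀ ℂ) := fun v => pr (fun τ => v ∈ τ) bp with hrdef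
        have hTc : ∀ v ∈ T, κ v = c ∧ v ∉ σ ∧ ∃ τ ∈ bp.support, v ∈ τ := by
          intro v hv
          rw [hTdef, mem_biUnion] at hv
          obtain ⟨τ, hτ, hvf⟩ := hv
          rw [mem_filter] at hvf
          obtain ⟨hτb, -⟩ := pr_support hτ
          refine ⟨hvf.2, fun hvσ => ?_, τ, hτb, hvf.1⟩
          exact (Finset.disjoint_left.1 (hbp τ hτb).1.1) hvf.1 hvσ
        have hsplit : bp = b₀ + ∑ v ∈ T, r v := by
          ext ρ
          rw [Finsupp.add_apply, Finsupp.finset_sum_apply, hb₀def, pr_apply]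
          by_cases hρ0 : bp ρ = 0
          · rw [hρ0, Finset.sum_eq_zero (fun v _ => by rw [hrdef, pr_apply]; split_ifs <;> simp [hρ0])]
            split_ifs <;> simp
          · have hψρ := (hbp ρ (Finsupp.mem_support_iff.2 hρ0)).1
            by_cases hCρ : ∃ v ∈ ρ, κ v = c
            · rw [if_neg (not_not_intro hCρ), zero_add]
              obtain ⟨v₀, hv₀, hκ₀⟩ := hCρ
              have hv₀T : v₀ ∈ T := by
                rw [hTdef, mem_biUnion]
                refine ⟨ρ, Finsupp.mem_support_iff.2 ?_, mem_filter.2 ⟨hv₀, hκ₀⟩⟩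
                rw [pr_apply, if_pos ⟨v₀, hv₀, hκ₀⟩]
                exact hρ0
              rw [Finset.sum_eq_single_of_mem v₀ hv₀T]
              · rw [hrdef, pr_apply, if_pos hv₀]
              · intro w hwT hwne
                rw [hrdef, pr_apply, if_neg]
                intro hwρ
                exact hwne (huniq ρ hψρ.2.1 w hwρ (hTc w hwT).1 v₀ hv₀ hκ₀)
            · rw [if_pos hCρ, Finset.sum_eq_zero, add_zero]
              intro v hvT
              rw [hrdef, pr_apply, if_neg]
              intro hvρ
              exact hCρ ⟨v, hvρ, (hTc v hvT).1⟩
        have hrfree : ∀ v : V, ∀ τ ∈ (r v).support, v ∈ τ :=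
          fun v τ hτ => (pr_support hτ).2
        -- E: the v-parts are relative cycles
        have hEβ : ∀ v ∈ T, pr (fun ρ => psi Φ κ (insert c S) σ ρ ∧ v ∈ ρ) (bdry (r v)) = 0 := by
          intro v hvT
          have hκv := (hTc v hvT).1
          have h1 : pr (fun ρ => psi Φ κ (insert c S) σ ρ ∧ v ∈ ρ) (bdry bp - z) = 0 :=
            pr_eq_zero_of _ _ (fun ρ hρ hPρ => hcycp ρ hρ hPρ.1)
          have h2 : pr (fun ρ => psi Φ κ (insert c S) σ ρ ∧ v ∈ ρ) z = 0 :=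
            pr_eq_zero_of _ _ (fun ρ hρ hPρ => hcS (hκv ▸ ((hz ρ hρ).1.2.2 v hPρ.2)))
          have h3 : pr (fun ρ => psi Φ κ (insert c S) σ ρ ∧ v ∈ ρ) (bdry b₀) = 0 := by
            refine pr_eq_zero_of _ _ ?_
            intro ρ hρ hPρ
            obtain ⟨τ, hτ, u, hu, rfl⟩ := mem_support_bdry hρ
            obtain ⟨-, hnC⟩ := pr_support hτ
            exact hnC ⟨v, mem_of_mem_erase hPρ.2, hκv⟩
          have h4 : ∀ w ∈ T, w ≠ v →
              pr (fun ρ => psi Φ κ (insert c S) σ ρ ∧ v ∈ ρ) (bdry (r w)) = 0 := by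
            intro w hwT hwv
            refine pr_eq_zero_of _ _ ?_
            intro ρ hρ hPρ
            obtain ⟨τ, hτ, u, hu, rfl⟩ := mem_support_bdry hρ
            obtain ⟨hτb, hwτ⟩ := pr_support hτ
            exact hwv (huniq τ (hbp τ hτb).1.2.1 w hwτ (hTc w hwT).1 v
              (mem_of_mem_erase hPρ.2) hκv)
          have hexp : pr (fun ρ => psi Φ κ (insert c S) σ ρ ∧ v ∈ ρ) (bdry b₀)
              + ∑ w ∈ T, pr (fun ρ => psi Φ κ (insert c S) σ ρ ∧ v ∈ ρ) (bdry (r w))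
              - pr (fun ρ => psi Φ κ (insert c S) σ ρ ∧ v ∈ ρ) z = 0 := by
            rw [← h1]
            conv_rhs => rw [hsplit]
            simp only [map_sub, map_add, map_sum]
          rw [Finset.sum_eq_single_of_mem v hvT h4, h3, h2, zero_add, sub_zero] at hexp
          exact hexp
        -- hbC : boundary of r v via cone
        have hβfree : ∀ v : V, ∀ τ ∈ (unjoin v (r v)).support, v ∉ τ := by
          intro v τ hτ
          obtain ⟨τ', -, rfl⟩ := unjoin_support hτ
          exact notMem_erase _ _
        have hbC : ∀ v : V, bdry (r v) = unjoin v (r v) - cone v (bdry (unjoin v (r v))) := by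
          intro v
          conv_lhs => rw [← cone_unjoin (hrfree v)]
          exact bdry_cone (hβfree v)
        have hconez : ∀ v ∈ T,
            pr (fun ρ => psi Φ κ (insert c S) σ ρ) (cone v (bdry (unjoin v (r v)))) = 0 := by
          intro v hvT
          have hE := hEβ v hvT
          rw [hbC v, map_sub] at hE
          have h5 : pr (fun ρ => psi Φ κ (insert c S) σ ρ ∧ v ∈ ρ) (unjoin v (r v)) = 0 :=
            pr_eq_zero_of _ _ (fun τ hτ hPτ => hβfree v τ hτ hPτ.2)
          rw [h5, zero_sub, neg_eq_zero] at hE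
          refine pr_eq_zero_of _ _ ?_
          intro ρ hρ hψρ
          have hvρ := (cone_support hρ).1
          exact (pr_eq_zero_iff _ _).1 hE ρ hρ ⟨hψρ, hvρ⟩
        -- erase-faces lie in the link restriction
        have herase : ∀ v ∈ T, ∀ τ ∈ bp.support, v ∈ τ →
            psi Φ κ S (insert v σ) (τ.erase v) := by
          intro v hvT τ hτb hvτ
          have hκv := (hTc v hvT).1
          have hψτ := (hbp τ hτb).1
          refine ⟨?_, ?_, ?_⟩
          · rw [disjoint_insert_right]
            exact ⟨notMem_erase _ _, disjoint_of_subset_left (erase_subset _ _) hψτ.1⟩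
          · have hid : τ.erase v ∪ insert v σ = τ ∪ σ := by
              rw [union_insert, ← insert_union, insert_erase hvτ]
            rw [hid]
            exact hψτ.2.1
          · intro u hu
            have huτ := mem_of_mem_erase hu
            rcases mem_insert.1 (hψτ.2.2 u huτ) with h | h
            · exact absurd (huniq τ hψτ.2.1 u huτ h v hvτ hκv) (ne_of_mem_erase hu)
            · exact h
        have hβdat : ∀ v ∈ T, SupportedOnCard (psi Φ κ S (insert v σ)) i (unjoin v (r v)) := by
          intro v hvT ρ hρ
          obtain ⟨τ, hτ, rfl⟩ := unjoin_support hρ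
          obtain ⟨hτb, hvτ⟩ := pr_support hτ
          refine ⟨herase v hvT τ hτb hvτ, ?_⟩
          rw [card_erase_of_mem hvτ, (hbp τ hτb).2]
          omega
        -- G: β v is a cycle for the link pair
        have hβcyc : ∀ v ∈ T, ∀ ρ ∈ (bdry (unjoin v (r v))).support,
            ¬ psi Φ κ S (insert v σ) ρ := by
          intro v hvT ρ hρ hψρ
          have hκv := (hTc v hvT).1
          have hvσ := (hTc v hvT).2.1
          have hvρ : v ∉ ρ := by
            obtain ⟨τ', hτ', u, hu, rfl⟩ := mem_support_bdry hρ
            exact fun hvin => hβfree v τ' hτ' (mem_of_mem_erase hvin)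
          have hbdryfree : ∀ τ ∈ (bdry (unjoin v (r v))).support, v ∉ τ := by
            intro τ hτ
            obtain ⟨τ', hτ', u, hu, rfl⟩ := mem_support_bdry hτ
            exact fun hvin => hβfree v τ' hτ' (mem_of_mem_erase hvin)
          have happ := cone_apply_insert hbdryfree hvρ
          have hψins : psi Φ κ (insert c S) σ (insert v ρ) := by
            refine ⟨?_, ?_, ?_⟩
            · rw [disjoint_insert_left]
              exact ⟨hvσ, disjoint_of_subset_right (subset_insert v σ) hψρ.1⟩
            · have hid : insert v ρ ∪ σ = ρ ∪ insert v σ := by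
                rw [insert_union, ← union_insert]
              rw [hid]
              exact hψρ.2.1
            · intro u hu
              rcases mem_insert.1 hu with rfl | h
              · rw [hκv]; exact mem_insert_self c S
              · exact mem_insert_of_mem (hψρ.2.2 u h)
          have h7 := pr_apply_of (fun ρ' => psi Φ κ (insert c S) σ ρ')
            (cone v (bdry (unjoin v (r v)))) (insert v ρ) hψins
          rw [hconez v hvT] at h7
          simp only [Finsupp.coe_zero, Pi.zero_apply] at h7
          rw [happ] at h7
          have hne := Finsupp.mem_support_iff.1 hρ
          have hsgn : sgn ρ v ≠ 0 := by
            unfold sgn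
            exact pow_ne_zero _ (by norm_num)
          exact hne ((mul_eq_zero.1 h7.symm).resolve_left hsgn)
        -- H: dimension witness for the links
        have hwit : ∀ v ∈ T, ∃ τ₁, psi Φ κ S (insert v σ) τ₁ ∧ i + 1 ≤ τ₁.card := by
          intro v hvT
          obtain ⟨hκv, hvσ, τ, hτb, hvτ⟩ := hTc v hvT
          obtain ⟨τ₁, hτ₁, hτ₁c⟩ := psi_ext hbal (herase v hvT τ hτb hvτ)
          refine ⟨τ₁, hτ₁, ?_⟩
          have himg : (insert v σ).image κ = insert c (σ.image κ) := by
            rw [image_insert, hκv]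
          have hsd : S \ (insert v σ).image κ = S \ σ.image κ := by
            rw [himg]
            ext j
            simp only [mem_sdiff, mem_insert]
            constructor
            · rintro ⟨hjS, hj⟩; exact ⟨hjS, fun h => hj (Or.inr h)⟩
            · rintro ⟨hjS, hj⟩
              refine ⟨hjS, ?_⟩
              rintro (rfl | h)
              · exact hcS hjS
              · exact hj h
          have hcb := psi_card_le hbal hτw
          rw [hsd] at hτ₁c
          omega
        -- I: solve each link problem by the inductive hypothesis
        have hall : ∀ v ∈ T, ∃ b', SupportedOnCard (psi Φ κ S (insert v σ)) (i+1) b' ∧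
            ∀ ρ ∈ (bdry b' - unjoin v (r v)).support, ¬ psi Φ κ S (insert v σ) ρ := by
          intro v hvT
          have hκv := (hTc v hvT).1
          have hmeas2 : (univ \ (S ∪ (insert v σ).image κ)).card ≤ μ := by
            have himg : (insert v σ).image κ = insert c (σ.image κ) := by
              rw [image_insert, hκv]
            have heq2 : univ \ (S ∪ (insert v σ).image κ)
                = (univ \ (S ∪ σ.image κ)).erase c := by
              rw [himg]
              ext j
              simp only [mem_sdiff, mem_union, mem_erase, mem_insert, mem_univ, true_and]
              tauto
            rw [heq2, card_erase_of_mem hcmem]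
            omega
          exact ih (insert v σ) S i hmeas2 hiℓ (hwit v hvT) _ (hβdat v hvT) (hβcyc v hvT)
        choose b' hb'1 hb'2 using hall
        refine ⟨b₀ + ∑ v ∈ T.attach, pr (fun ρ => psi Φ κ (insert c S) σ ρ) (b' v.1 v.2), ?_, ?_⟩
        · intro ρ hρ
          have hρne := Finsupp.mem_support_iff.1 hρ
          rw [Finsupp.add_apply, Finsupp.finset_sum_apply] at hρne
          by_cases h0 : b₀ ρ = 0
          · rw [h0, zero_add] at hρne
            obtain ⟨v, hvmem, hvne⟩ := Finset.exists_ne_zero_of_sum_ne_zero hρne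
            have hρsup : ρ ∈ (pr (fun ρ' => psi Φ κ (insert c S) σ ρ') (b' v.1 v.2)).support :=
              Finsupp.mem_support_iff.2 hvne
            obtain ⟨hρb', hψ'⟩ := pr_support hρsup
            have hins := hb'1 v.1 v.2 ρ hρb'
            exact ⟨⟨hψ'.1, hψ'.2.1, fun u hu => hins.1.2.2 u hu⟩, hins.2⟩
          · have hρb := pr_support (Finsupp.mem_support_iff.2 h0)
            have hψ' := (hbp ρ hρb.1).1
            refine ⟨⟨hψ'.1, hψ'.2.1, fun u hu => ?_⟩, (hbp ρ hρb.1).2⟩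
            rcases mem_insert.1 (hψ'.2.2 u hu) with h | h
            · exact absurd ⟨u, hu, h⟩ hρb.2
            · exact h
        · have hper : ∀ (v : V) (hvT : v ∈ T),
              pr (fun ρ => psi Φ κ (insert c S) σ ρ)
                (bdry (pr (fun ρ => psi Φ κ (insert c S) σ ρ) (b' v hvT)))
              = pr (fun ρ => psi Φ κ (insert c S) σ ρ) (bdry (r v)) := by
            intro v hvT
            have hRHS : pr (fun ρ => psi Φ κ (insert c S) σ ρ) (bdry (r v))
                = pr (fun ρ => psi Φ κ (insert c S) σ ρ) (unjoin v (r v)) := by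
              rw [hbC v, map_sub, hconez v hvT, sub_zero]
            have h2a : pr (fun ρ => psi Φ κ (insert c S) σ ρ)
                (bdry (pr (fun τ => ¬ psi Φ κ (insert c S) σ τ) (b' v hvT))) = 0 := by
              refine pr_eq_zero_of _ _ ?_
              intro ρ hρ hψρ
              obtain ⟨τ, hτ, w, hw, rfl⟩ := mem_support_bdry hρ
              obtain ⟨hτb', hnψτ⟩ := pr_support hτ
              apply hnψτ
              have hins := (hb'1 v hvT τ hτb').1
              refine ⟨disjoint_of_subset_right (subset_insert v σ) hins.1, ?_,
                fun u hu => mem_insert_of_mem (hins.2.2 u hu)⟩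
              have hup : Φ (insert v (τ ∪ σ)) := by
                have hid : τ ∪ insert v σ = insert v (τ ∪ σ) := union_insert ..
                rw [← hid]
                exact hins.2.1
              exact hbal.2.1 (τ.erase w ∪ σ) (τ ∪ σ) (insert v (τ ∪ σ))
                (union_subset_union_left (erase_subset _ _)) (subset_insert _ _)
                hψρ.2.1 hup
            have h2b : pr (fun ρ => psi Φ κ (insert c S) σ ρ)
                (bdry (b' v hvT) - unjoin v (r v)) = 0 := by
              refine pr_eq_zero_of _ _ ?_
              intro ρ hρ hψρ
              have hsupp : ∃ τ, psi Φ κ S (insert v σ) τ ∧ ρ ⊆ τ := by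
                have hρne := Finsupp.mem_support_iff.1 hρ
                rw [Finsupp.sub_apply] at hρne
                by_cases hb : (bdry (b' v hvT)) ρ = 0
                · have hne2 : (unjoin v (r v)) ρ ≠ 0 := by
                    intro h
                    rw [hb, h, sub_zero] at hρne
                    exact hρne rfl
                  exact ⟨ρ, (hβdat v hvT ρ (Finsupp.mem_support_iff.2 hne2)).1,
                    Finset.Subset.refl ρ⟩
                · obtain ⟨τ, hτ, w, hw, rfl⟩ := mem_support_bdry (Finsupp.mem_support_iff.2 hb)
                  exact ⟨τ, (hb'1 v hvT τ hτ).1, erase_subset _ _⟩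
              obtain ⟨τ, hψτ, hρτ⟩ := hsupp
              have hvτ' : v ∉ τ := by
                have hd2 := hψτ.1
                rw [disjoint_insert_right] at hd2
                exact hd2.1
              have hψρins : psi Φ κ S (insert v σ) ρ := by
                refine ⟨?_, ?_, fun u hu => hψτ.2.2 u (hρτ hu)⟩
                · rw [disjoint_insert_right]
                  exact ⟨fun h => hvτ' (hρτ h), hψρ.1⟩
                · have hid1 : ρ ∪ insert v σ = insert v (ρ ∪ σ) := union_insert ..
                  have hid2 : τ ∪ insert v σ = insert v (τ ∪ σ) := union_insert ..
                  rw [hid1]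
                  refine hbal.2.1 (ρ ∪ σ) (insert v (ρ ∪ σ)) (insert v (τ ∪ σ))
                    (subset_insert _ _) (insert_subset_insert _ (union_subset_union_left hρτ))
                    hψρ.2.1 ?_
                  rw [← hid2]
                  exact hψτ.2.1
              exact hb'2 v hvT ρ hρ hψρins
            have hth : pr (fun ρ => psi Φ κ (insert c S) σ ρ) (bdry (b' v hvT))
                = pr (fun ρ => psi Φ κ (insert c S) σ ρ) (unjoin v (r v)) := by
              rw [map_sub] at h2b
              exact sub_eq_zero.1 h2b
            rw [hRHS, ← hth]
            conv_rhs => rw [(pr_add_pr_not (fun ρ => psi Φ κ (insert c S) σ ρ) (b' v hvT)).symm]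
            rw [map_add, map_add, h2a, add_zero]
          have hkey : pr (fun ρ => psi Φ κ (insert c S) σ ρ)
              (bdry (b₀ + ∑ v ∈ T.attach,
                pr (fun ρ => psi Φ κ (insert c S) σ ρ) (b' v.1 v.2)) - z) = 0 := by
            have hc0 : pr (fun ρ => psi Φ κ (insert c S) σ ρ) (bdry bp - z) = 0 :=
              pr_eq_zero_of _ _ (fun ρ hρ hψ => hcycp ρ hρ hψ)
            simp only [map_sub, map_add, map_sum]
            rw [Finset.sum_congr rfl (fun v _ => hper v.1 v.2)]
            rw [Finset.sum_attach T
              (fun v => pr (fun ρ => psi Φ κ (insert c S) σ ρ) (bdry (r v)))]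
            have hexp2 : pr (fun ρ => psi Φ κ (insert c S) σ ρ) (bdry b₀)
                + ∑ v ∈ T, pr (fun ρ => psi Φ κ (insert c S) σ ρ) (bdry (r v))
                - pr (fun ρ => psi Φ κ (insert c S) σ ρ) z
                = pr (fun ρ => psi Φ κ (insert c S) σ ρ) (bdry bp - z) := by
              conv_rhs => rw [hsplit]
              simp only [map_sub, map_add, map_sum]
            rw [hexp2, hc0]
          intro ρ hρ hψρ
          have h10 : pr (fun ρ' => psi Φ κ S σ ρ')
              (bdry (b₀ + ∑ v ∈ T.attach,
                pr (fun ρ' => psi Φ κ (insert c S) σ ρ') (b' v.1 v.2)) - z) = 0 := by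
            rw [← pr_pr_of_imp hmono, hkey, map_zero]
          exact (pr_eq_zero_iff _ _).1 h10 ρ hρ hψρ
end Main

/-- Let `Φ` be a balanced relative simplicial complex of dimension
`d-1` with coloring `κ : V → Fin d`.  For every `S ⊆ [d]`: if `Φ` satisfies Serre's
condition `(S_ℓ)` then so does `Φ|_S`; in particular if `Φ` is relatively
Cohen–Macaulay (satisfies `(S_{dim Φ})` with `dim Φ = d-1`) then so is `Φ|_S`
(which has dimension `|S| - 1`). -/
theorem stmt10 [LinearOrder V] (d : ℕ) (Φ : Finset V → Prop) (κ : V → Fin d)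
    (hbal : BalancedRel Φ κ) (S : Finset (Fin d)) :
    (∀ ℓ : ℕ, SerreRel Φ ℓ → SerreRel (restrictC Φ κ S) ℓ) ∧
    (SerreRel Φ (d - 1) → SerreRel (restrictC Φ κ S) (S.card - 1)) := by
  classical
  have hmain : ∀ ℓ : ℕ, SerreRel Φ ℓ → SerreRel (restrictC Φ κ S) ℓ := by
    intro ℓ hSer σ' hσ' i hiℓ hdim
    obtain ⟨τw, hτwΔ, hτwΓ, hτwc⟩ := hdim
    have hΦ'w : restrictC Φ κ S (τw ∪ σ') := by
      by_contra hn
      exact hτwΓ ⟨hτwΔ.1, hτwΔ.2, hn⟩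
    have hκσ' : ∀ u ∈ σ', κ u ∈ S := fun u hu => hΦ'w.2 u (mem_union_right _ hu)
    have heq1 : ∀ τ, psi Φ κ S σ' τ ↔ (Disjoint τ σ' ∧ restrictC Φ κ S (τ ∪ σ')) := by
      intro τ
      constructor
      · rintro ⟨h1, h2, h3⟩
        refine ⟨h1, h2, fun u hu => ?_⟩
        rcases mem_union.1 hu with h | h
        · exact h3 u h
        · exact hκσ' u h
      · rintro ⟨h1, h2⟩
        exact ⟨h1, h2.1, fun u hu => h2.2 u (mem_union_left _ hu)⟩
    have hψw : psi Φ κ S σ' τw := (heq1 τw).2 ⟨hτwΔ.1, hΦ'w⟩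
    intro cc hcc hccb
    have hz : SupportedOnCard (psi Φ κ S σ') i (pr (psi Φ κ S σ') cc) := by
      intro τ hτ
      obtain ⟨hτc, hψ⟩ := pr_support hτ
      exact ⟨hψ, (hcc τ hτc).2⟩
    have hinterval : ∀ ρ τ : Finset V, ρ ⊆ τ → psi Φ κ S σ' ρ →
        link (closureOf (restrictC Φ κ S)) σ' τ → psi Φ κ S σ' τ := by
      intro ρ τ hsub hψρ hτΔ
      obtain ⟨ρ₂, hρ₂, hτρ₂⟩ := hτΔ.2
      rw [heq1]
      refine ⟨hτΔ.1, ?_, fun u hu => hρ₂.2 u (hτρ₂ hu)⟩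
      exact hbal.2.1 (ρ ∪ σ') (τ ∪ σ') ρ₂ (union_subset_union_left hsub) hτρ₂ hψρ.2.1 hρ₂.1
    have hccdec : cc = pr (psi Φ κ S σ') cc + pr (fun τ => ¬ psi Φ κ S σ' τ) cc :=
      (pr_add_pr_not _ _).symm
    have hzc : ∀ ρ ∈ (bdry (pr (psi Φ κ S σ') cc)).support, ¬ psi Φ κ S σ' ρ := by
      intro ρ hρ hψρ
      apply Finsupp.mem_support_iff.1 hρ
      have hdec : bdry (pr (psi Φ κ S σ') cc)
          = bdry cc - bdry (pr (fun τ => ¬ psi Φ κ S σ' τ) cc) := by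
        conv_lhs => rw [eq_sub_of_add_eq (pr_add_pr_not (psi Φ κ S σ') cc)]
        rw [map_sub]
      rw [hdec, Finsupp.sub_apply]
      have h1 : (bdry cc) ρ = 0 := by
        by_contra hne
        have hΓ := hccb ρ (Finsupp.mem_support_iff.2 hne)
        exact hΓ.2.2 ((heq1 ρ).1 hψρ).2
      have h2 : (bdry (pr (fun τ => ¬ psi Φ κ S σ' τ) cc)) ρ = 0 := by
        by_contra hne
        obtain ⟨τ, hτ, w, hw, heρ⟩ := mem_support_bdry (Finsupp.mem_support_iff.2 hne)
        obtain ⟨hτc, hnψ⟩ := pr_support hτ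
        refine hnψ (hinterval ρ τ ?_ hψρ (hcc τ hτc).1)
        rw [heρ]
        exact erase_subset _ _
      rw [h1, h2, sub_zero]
    obtain ⟨b, hb, hbc⟩ := main hbal hSer ((univ \ (S ∪ σ'.image κ)).card) σ' S i le_rfl hiℓ
      ⟨τw, hψw, hτwc⟩ (pr (psi Φ κ S σ') cc) hz hzc
    refine ⟨b, bdry b - cc, ?_, ?_, by abel⟩
    · intro τ hτ
      have hψ := hb τ hτ
      exact ⟨⟨hψ.1.1, τ ∪ σ', ((heq1 τ).1 hψ.1).2, Finset.Subset.refl _⟩, hψ.2⟩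
    · intro ρ hρ
      have hval := Finsupp.mem_support_iff.1 hρ
      rw [Finsupp.sub_apply] at hval
      have hΔρ : link (closureOf (restrictC Φ κ S)) σ' ρ ∧ ρ.card = i := by
        by_cases hbb : (bdry b) ρ = 0
        · have hccρ : cc ρ ≠ 0 := by
            intro h
            rw [hbb, h, sub_zero] at hval
            exact hval rfl
          have := hcc ρ (Finsupp.mem_support_iff.2 hccρ)
          exact this
        · obtain ⟨τ, hτ, w, hw, heρ⟩ := mem_support_bdry (Finsupp.mem_support_iff.2 hbb)
          have hψτ := hb τ hτ
          have hρτ : ρ ⊆ τ := by rw [heρ]; exact erase_subset _ _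
          constructor
          · refine ⟨disjoint_of_subset_left hρτ hψτ.1.1,
              τ ∪ σ', ((heq1 τ).1 hψτ.1).2, union_subset_union_left hρτ⟩
          · rw [heρ, card_erase_of_mem hw, hψτ.2]
            omega
      have hnΦ' : ¬ restrictC Φ κ S (ρ ∪ σ') := by
        intro hΦ'ρ
        have hψρ : psi Φ κ S σ' ρ := (heq1 ρ).2 ⟨hΔρ.1.1, hΦ'ρ⟩
        apply hval
        have e1 : (bdry b - cc) ρ
            = (bdry b - pr (psi Φ κ S σ') cc) ρ - (pr (fun τ => ¬ psi Φ κ S σ' τ) cc) ρ := by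
          conv_lhs => rw [hccdec]
          rw [Finsupp.sub_apply, Finsupp.add_apply, Finsupp.sub_apply]
          ring
        rw [Finsupp.sub_apply] at e1
        rw [e1]
        have h3 : (bdry b - pr (psi Φ κ S σ') cc) ρ = 0 := by
          by_contra hne
          exact hbc ρ (Finsupp.mem_support_iff.2 hne) hψρ
        have h4 : (pr (fun τ => ¬ psi Φ κ S σ' τ) cc) ρ = 0 := by
          rw [pr_apply, if_neg (not_not_intro hψρ)]
        rw [h3, h4, sub_zero]
      exact ⟨⟨hΔρ.1.1, hΔρ.1.2, hnΦ'⟩, hΔρ.2⟩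
  refine ⟨hmain, fun h => ?_⟩
  have hcard : S.card ≤ d := by
    have := card_le_univ S
    simpa using this
  intro σ' hσ' i hiℓ hdim
  exact hmain (d-1) h σ' hσ' i (by omega) hdim
end

section
/- Let D be a tertispecial double poset on a finite set N. Then for every pair of elements x <₁ y that form an inversion (x <₁ y and y <₂ x), there exist elements w, z with x ≤₁ w ≺₁ z ≤₁ y such that (w, z) is a descent, i.e., w ≺₁ z (a covering relation in ≤₁) and z <₂ w. Consequently D is inversion-reducible. -/
/-- `covOf le x y`: `y` covers `x` in the partial order `le`. -/
def covOf {N : Type*} (le : N → N → Prop) (x y : N) : Prop :=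
  le x y ∧ x ≠ y ∧ ∀ z, le x z → le z y → z = x ∨ z = y

/-- `ltOf le x y`: strict inequality `x < y` in the partial order `le`. -/
def ltOf {N : Type*} (le : N → N → Prop) (x y : N) : Prop :=
  le x y ∧ x ≠ y

/-- Let `D = (N, ≤₁, ≤₂)` be a tertispecial double poset on a finite
set `N` (whenever `m ≺₁ m'` is a covering relation, `m` and `m'` are
`≤₂`-comparable).  Then for every inversion `(x, y)` (`x <₁ y` and `y <₂ x`) there
exist `w, z` with `x ≤₁ w ≺₁ z ≤₁ y` such that `(w, z)` is a descent, i.e. `w ≺₁ z`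
and `z <₂ w`.  Consequently `D` is inversion-reducible. -/
theorem stmt14 {N : Type*} [Fintype N] (le1 le2 : N → N → Prop)
    [IsPartialOrder N le1] [IsPartialOrder N le2]
    (tertispecial : ∀ x y, covOf le1 x y → le2 x y ∨ le2 y x)
    (x y : N) (h1 : ltOf le1 x y) (h2 : ltOf le2 y x) :
    ∃ w z, le1 x w ∧ covOf le1 w z ∧ le1 z y ∧ ltOf le2 z w := by
  classical
  have t1 : ∀ a b c : N, le1 a b → le1 b c → le1 a c := fun a b c => IsTrans.trans a b c
  have a1 : ∀ a b : N, le1 a b → le1 b a → a = b := fun a b => Std.Antisymm.antisymm a b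
  have r1 : ∀ a : N, le1 a a := Std.Refl.refl
  have t2 : ∀ a b c : N, le2 a b → le2 b c → le2 a c := fun a b c => IsTrans.trans a b c
  have a2 : ∀ a b : N, le2 a b → le2 b a → a = b := fun a b => Std.Antisymm.antisymm a b
  -- existence of covers
  have hcov : ∀ a b : N, ltOf le1 a b → ∃ z, covOf le1 a z ∧ le1 z b := by
    intro a b hab
    have wf : WellFounded (fun u v : N => ltOf le1 u v) := by
      haveI : IsTrans N (fun u v : N => ltOf le1 u v) := by
        constructor
        intro u v w huv hvw
        refine ⟨t1 _ _ _ huv.1 hvw.1, ?_⟩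
        rintro rfl
        exact hvw.2 (a1 _ _ hvw.1 huv.1)
      haveI : IsIrrefl N (fun u v : N => ltOf le1 u v) := ⟨fun u h => h.2 rfl⟩
      exact Finite.wellFounded_of_trans_of_irrefl _
    obtain ⟨z, hzS, hmin⟩ :=
      wf.has_min {t | ltOf le1 a t ∧ le1 t b} ⟨b, hab, r1 b⟩
    refine ⟨z, ⟨hzS.1.1, hzS.1.2, ?_⟩, hzS.2⟩
    intro t hat htz
    by_contra hcon
    push_neg at hcon
    have htS : t ∈ {t | ltOf le1 a t ∧ le1 t b} :=
      ⟨⟨hat, fun h => hcon.1 h.symm⟩, t1 _ _ _ htz hzS.2⟩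
    exact hmin t htS ⟨htz, hcon.2⟩
  -- main induction on the number of elements above x
  suffices H : ∀ n (x y : N), Set.ncard {t | le1 x t} = n → ltOf le1 x y → ltOf le2 y x →
      ∃ w z, le1 x w ∧ covOf le1 w z ∧ le1 z y ∧ ltOf le2 z w by
    exact H _ x y rfl h1 h2
  intro n
  induction n using Nat.strong_induction_on with
  | _ n IH =>
    intro x y hn h1 h2
    obtain ⟨z, hcz, hzy⟩ := hcov x y h1
    rcases tertispecial x z hcz with hxz | hzx
    · -- le2 x z : recurse from z
      have hzy' : z ≠ y := by
        rintro rfl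
        exact h1.2 (a2 _ _ hxz h2.1)
      have hyz2 : ltOf le2 y z := ⟨t2 _ _ _ h2.1 hxz, fun h => hzy' h.symm⟩
      have hsub : {t | le1 z t} ⊂ {t | le1 x t} := by
        constructor
        · intro t ht; exact t1 _ _ _ hcz.1 ht
        · intro hs
          have : le1 z x := hs (r1 x)
          exact hcz.2.1 (a1 _ _ hcz.1 this)
      have hlt : Set.ncard {t | le1 z t} < n := by
        rw [← hn]
        exact Set.ncard_lt_ncard hsub (Set.toFinite _)
      obtain ⟨w, z', hw, hc, hz'y, hd⟩ :=
        IH _ hlt z y rfl ⟨hzy, hzy'⟩ hyz2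
      exact ⟨w, z', t1 _ _ _ hcz.1 hw, hc, hz'y, hd⟩
    · -- le2 z x : (x, z) is a descent
      exact ⟨x, z, r1 x, hcz, hzy, hzx, fun h => hcz.2.1 h.symm⟩
end

section
/- Let G = (V, U, D) be a mixed graph with no directed cycles, and let P be the poset on V given by the transitive closure of the directed-edge relation. Then a function f: V → ℕ is a weak proper coloring of G (f(u) ≠ f(v) for uv ∈ U and f(u) ≤ f(v) for (u,v) ∈ D) if and only if the level sets of f form a chain of order ideals I₁ ⊂ I₂ ⊂ ⋯ ⊂ I_k of P (where I_j is the preimage of the j smallest used values) such that each difference I_{j+1} ∖ I_j contains no undirected edge of G. -/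
/-- Let `G = (V, U, D)` be a mixed graph with no directed cycles
(the reflexive-transitive closure of the directed-edge relation `Dd` is
antisymmetric), and let `P` be the poset on `V` given by this transitive closure.
A function `f : V → ℕ` is a weak proper coloring of `G` (`f u ≠ f v` for undirected
edges and `f u ≤ f v` for directed edges) if and only if its level sets form a chain
of order ideals of `P` with stable differences: every down-set `{v | f v ≤ c}` is an
order ideal of `P`, and no level set `{v | f v = c}` (the difference of two
consecutive ideals of the chain) contains an undirected edge. -/
theorem stmt16 {V : Type*} [Fintype V] (U Dd : V → V → Prop)
    (hUsymm : Symmetric U)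
    (hacyclic : ∀ u v, Relation.ReflTransGen Dd u v →
      Relation.ReflTransGen Dd v u → u = v)
    (f : V → ℕ) :
    ((∀ u v, U u v → f u ≠ f v) ∧ (∀ u v, Dd u v → f u ≤ f v)) ↔
    ((∀ c : ℕ, ∀ u v, Relation.ReflTransGen Dd u v → f v ≤ c → f u ≤ c) ∧
     (∀ c : ℕ, ¬ ∃ u v, U u v ∧ f u = c ∧ f v = c)) := by
  constructor
  · rintro ⟨hU, hD⟩
    refine ⟨?_, ?_⟩
    · have mono : ∀ u v, Relation.ReflTransGen Dd u v → f u ≤ f v := by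
        intro u v huv
        induction huv with
        | refl => exact le_rfl
        | tail _ h ih => exact ih.trans (hD _ _ h)
      exact fun c u v huv hv => (mono u v huv).trans hv
    · rintro c ⟨u, v, huv, hu, hv⟩
      exact hU u v huv (hu.trans hv.symm)
  · rintro ⟨hideal, hlevel⟩
    refine ⟨?_, ?_⟩
    · intro u v huv hfe
      exact hlevel (f u) ⟨u, v, huv, rfl, hfe.symm⟩
    · intro u v huv
      exact hideal (f v) u v (Relation.ReflTransGen.single huv) le_rfl
end

section
/- Let d ≥ 1, ℓ ≤ d, i ≤ ℓ, and fix S ⊆ [d]. Suppose (h_T)_{T ⊆ [d]} are virtual characters of a finite group G such that for all R ⊆ T' ⊆ [d] with |R| = ℓ, the sum h_{R,T'} := Σ_{T: R ⊆ T ⊆ T'} h_T is an effective character. Then Σ_{T ⊆ S, |T| ≥ ℓ} C(|T|−(ℓ−i), i)·h_T is an effective character. -/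
open Finset

/-- The `k` smallest elements of `T`. -/
private def low {d : ℕ} (k : ℕ) (T : Finset (Fin d)) : Finset (Fin d) :=
  ((T.sort (· ≤ ·)).take k).toFinset

private lemma low_subset {d : ℕ} (k : ℕ) (T : Finset (Fin d)) : low k T ⊆ T := by
  intro x hx
  rw [low, List.mem_toFinset] at hx
  exact (Finset.mem_sort _).1 (List.mem_of_mem_take hx)

private lemma low_card {d : ℕ} {k : ℕ} {T : Finset (Fin d)} (hk : k ≤ T.card) :
    (low k T).card = k := by
  rw [low, List.toFinset_card_of_nodup ((List.take_sublist _ _).nodup (T.sort_nodup _)),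
    List.length_take, Finset.length_sort]
  omega

private lemma lt_of_not_mem_low {d : ℕ} {k : ℕ} {T : Finset (Fin d)} {x y : Fin d}
    (hx : x ∈ T) (hxl : x ∉ low k T) (hy : y ∈ low k T) : y < x := by
  have hxd : x ∈ (T.sort (· ≤ ·)).drop k := by
    have h0 := List.take_append_drop k (T.sort (· ≤ ·))
    have hxs : x ∈ T.sort (· ≤ ·) := (Finset.mem_sort _).2 hx
    rw [← h0, List.mem_append] at hxs
    rcases hxs with h | h
    · exact absurd (List.mem_toFinset.2 h) hxl
    · exact h
  have hyt : y ∈ (T.sort (· ≤ ·)).take k := List.mem_toFinset.1 hy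
  have hle : y ≤ x := List.Pairwise.rel_of_mem_take_of_mem_drop (T.pairwise_sort _) hyt hxd
  exact lt_of_le_of_ne hle (fun h => hxl (h ▸ hy))

private lemma low_eq {d : ℕ} {k : ℕ} {R L : Finset (Fin d)} (hLR : L ⊆ R) (hc : L.card = k)
    (hkR : k ≤ R.card) (hlt : ∀ x ∈ R, x ∉ L → ∀ y ∈ L, y < x) : low k R = L := by
  by_cases hL : L ⊆ low k R
  · exact (Finset.eq_of_subset_of_card_le hL (by rw [low_card hkR, hc])).symm
  · obtain ⟨y, hyL, hyl⟩ := Finset.not_subset.1 hL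
    have hsub : low k R ⊆ L := by
      intro z hz
      by_contra hzL
      exact absurd (hlt z (low_subset _ _ hz) hzL y hyL)
        (not_lt.2 (le_of_lt (lt_of_not_mem_low (hLR hyL) hyl hz)))
    exact Finset.eq_of_subset_of_card_le hsub (by rw [low_card hkR, hc])

/-- `U S k R` : the `k` smallest elements of `R` together with all larger elements of `S`. -/
private def Uset {d : ℕ} (S : Finset (Fin d)) (k : ℕ) (R : Finset (Fin d)) : Finset (Fin d) :=
  low k R ∪ S.filter (fun x => ∀ y ∈ low k R, y < x)

private lemma subset_Uset {d : ℕ} {S : Finset (Fin d)} {k : ℕ} {R : Finset (Fin d)}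
    (hRS : R ⊆ S) : R ⊆ Uset S k R := by
  intro x hx
  rw [Uset, Finset.mem_union]
  by_cases hxl : x ∈ low k R
  · exact Or.inl hxl
  · exact Or.inr (Finset.mem_filter.2 ⟨hRS hx, fun y hy => lt_of_not_mem_low hx hxl hy⟩)

private lemma Uset_subset {d : ℕ} {S : Finset (Fin d)} {k : ℕ} {R : Finset (Fin d)}
    (hRS : R ⊆ S) : Uset S k R ⊆ S :=
  Finset.union_subset ((low_subset _ _).trans hRS) (Finset.filter_subset _ _)

private lemma count_lemma {d : ℕ} {S T : Finset (Fin d)} {ℓ i : ℕ} (hi : i ≤ ℓ)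
    (hT : T ⊆ S) (hcard : ℓ ≤ T.card) :
    ((S.powersetCard ℓ).filter (fun R => R ⊆ T ∧ T ⊆ Uset S (ℓ - i) R)).card
      = (T.card - (ℓ - i)).choose i := by
  set k := ℓ - i with hk
  set L := low k T with hL
  have hLT : L ⊆ T := low_subset _ _
  have hLc : L.card = k := low_card (by omega)
  have himg : (S.powersetCard ℓ).filter (fun R => R ⊆ T ∧ T ⊆ Uset S k R)
      = ((T \ L).powersetCard i).image (fun K => L ∪ K) := by
    ext R
    simp only [Finset.mem_filter, Finset.mem_powersetCard, Finset.mem_image]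
    constructor
    · rintro ⟨⟨hRS, hRc⟩, hRT, hTU⟩
      have hlowR : low k R = L := by
        have h1 : low k T = low k R := by
          refine low_eq ((low_subset _ _).trans hRT) (low_card (by omega)) (by omega) ?_
          intro x hx hxl y hy
          have hxU := hTU hx
          rw [Uset, Finset.mem_union] at hxU
          rcases hxU with h | h
          · exact absurd h hxl
          · exact (Finset.mem_filter.1 h).2 y hy
        exact h1.symm
      have hLR : L ⊆ R := hlowR ▸ low_subset k R
      refine ⟨R \ L, ⟨Finset.sdiff_subset_sdiff hRT Finset.Subset.rfl, ?_⟩,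
        Finset.union_sdiff_of_subset hLR⟩
      rw [Finset.card_sdiff_of_subset hLR, hRc, hLc]; omega
    · rintro ⟨K, ⟨hKsub, hKc⟩, rfl⟩
      have hdisj : Disjoint L K := Finset.disjoint_left.2
        (fun a haL haK => (Finset.mem_sdiff.1 (hKsub haK)).2 haL)
      have hKT : K ⊆ T := hKsub.trans (Finset.sdiff_subset)
      have hRT : L ∪ K ⊆ T := Finset.union_subset hLT hKT
      have hRc : (L ∪ K).card = ℓ := by
        rw [Finset.card_union_of_disjoint hdisj, hLc, hKc]; omega
      have hlowR : low k (L ∪ K) = L := by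
        refine low_eq Finset.subset_union_left hLc (by omega) ?_
        intro x hx hxL y hy
        have hxK : x ∈ K := (Finset.mem_union.1 hx).resolve_left hxL
        exact lt_of_not_mem_low (hKT hxK) (Finset.mem_sdiff.1 (hKsub hxK)).2 hy
      refine ⟨⟨hRT.trans hT, hRc⟩, hRT, ?_⟩
      intro t ht
      rw [Uset, hlowR, Finset.mem_union]
      by_cases htL : t ∈ L
      · exact Or.inl htL
      · exact Or.inr (Finset.mem_filter.2 ⟨hT ht, fun y hy => lt_of_not_mem_low ht htL hy⟩)
  rw [himg, Finset.card_image_of_injOn, Finset.card_powersetCard, Finset.card_sdiff_of_subset hLT, hLc]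
  intro K1 h1 K2 h2 hEq
  have d1 : Disjoint L K1 := Finset.disjoint_left.2
    (fun a haL haK => (Finset.mem_sdiff.1 ((Finset.mem_powersetCard.1 h1).1 haK)).2 haL)
  have d2 : Disjoint L K2 := Finset.disjoint_left.2
    (fun a haL haK => (Finset.mem_sdiff.1 ((Finset.mem_powersetCard.1 h2).1 haK)).2 haL)
  have hEq' : L ∪ K1 = L ∪ K2 := hEq
  rw [← Finset.union_sdiff_cancel_left d1, ← Finset.union_sdiff_cancel_left d2, hEq']

/-- Virtual characters of a finite group are modeled by their integer
coefficient vectors `ι → ℤ` in the basis of irreducible characters; effective means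
`0 ≤ ·` pointwise.  Suppose `(h_T)_{T ⊆ [d]}` are virtual characters such that for all
`R ⊆ T' ⊆ [d]` with `|R| = ℓ`, the sum `h_{R,T'} = ∑_{R ⊆ T ⊆ T'} h_T` is effective.
Then for `i ≤ ℓ ≤ d` and any `S ⊆ [d]`,
`∑_{T ⊆ S, |T| ≥ ℓ} C(|T|-(ℓ-i), i) • h_T` is effective. -/
theorem stmt17 (d ℓ i : ℕ) (hi : i ≤ ℓ) (hℓ : ℓ ≤ d) {ι : Type*}
    (S : Finset (Fin d)) (h : Finset (Fin d) → ι → ℤ)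
    (hyp : ∀ R T' : Finset (Fin d), R ⊆ T' → R.card = ℓ →
      0 ≤ ∑ T ∈ T'.powerset.filter (fun T => R ⊆ T), h T) :
    0 ≤ ∑ T ∈ S.powerset.filter (fun T => ℓ ≤ T.card),
          (Nat.choose (T.card - (ℓ - i)) i) • h T := by
  set k := ℓ - i with hk
  have step1 : ∀ R ∈ S.powersetCard ℓ,
      (Uset S k R).powerset.filter (fun T => R ⊆ T)
        = S.powerset.filter (fun T => R ⊆ T ∧ T ⊆ Uset S k R) := by
    intro R hR
    have hRS : R ⊆ S := (Finset.mem_powersetCard.1 hR).1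
    ext T
    simp only [Finset.mem_filter, Finset.mem_powerset]
    constructor
    · rintro ⟨h1, h2⟩
      exact ⟨h1.trans (Uset_subset hRS), h2, h1⟩
    · rintro ⟨h1, h2, h3⟩
      exact ⟨h3, h2⟩
  have key : ∑ R ∈ S.powersetCard ℓ,
        ∑ T ∈ (Uset S k R).powerset.filter (fun T => R ⊆ T), h T
      = ∑ T ∈ S.powerset.filter (fun T => ℓ ≤ T.card),
          (Nat.choose (T.card - k) i) • h T := by
    calc ∑ R ∈ S.powersetCard ℓ,
          ∑ T ∈ (Uset S k R).powerset.filter (fun T => R ⊆ T), h T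
        = ∑ R ∈ S.powersetCard ℓ, ∑ T ∈ S.powerset,
            if R ⊆ T ∧ T ⊆ Uset S k R then h T else 0 := by
          refine Finset.sum_congr rfl fun R hR => ?_
          rw [step1 R hR, Finset.sum_filter]
      _ = ∑ T ∈ S.powerset, ∑ R ∈ S.powersetCard ℓ,
            if R ⊆ T ∧ T ⊆ Uset S k R then h T else 0 := Finset.sum_comm
      _ = ∑ T ∈ S.powerset,
            (if ℓ ≤ T.card then Nat.choose (T.card - k) i else 0) • h T := by
          refine Finset.sum_congr rfl fun T hT => ?_
          rw [← Finset.sum_filter, Finset.sum_const]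
          have hTS : T ⊆ S := Finset.mem_powerset.1 hT
          by_cases hc : ℓ ≤ T.card
          · rw [if_pos hc, count_lemma hi hTS hc]
          · rw [if_neg hc]
            have hempty : (S.powersetCard ℓ).filter
                (fun R => R ⊆ T ∧ T ⊆ Uset S k R) = ∅ := by
              refine Finset.filter_eq_empty_iff.2 ?_
              rintro R hR ⟨hRT, -⟩
              exact hc ((Finset.mem_powersetCard.1 hR).2 ▸ Finset.card_le_card hRT)
            rw [hempty, Finset.card_empty, zero_smul]
      _ = ∑ T ∈ S.powerset.filter (fun T => ℓ ≤ T.card),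
            (Nat.choose (T.card - k) i) • h T := by
          rw [Finset.sum_filter]
          exact Finset.sum_congr rfl fun T _ => by rw [ite_smul, zero_smul]
  rw [← key]
  refine Finset.sum_nonneg ?_
  intro R hR
  have hm := Finset.mem_powersetCard.1 hR
  exact hyp R (Uset S k R) (subset_Uset hm.1) hm.2
end
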